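/- arXiv:2401.17850 — 3 statements merged into one kernel-verified Lean document; each statement's English description precedes it below -/
import Mathlib

section
/- Let d ≥ 1 and let f ∈ MvPolynomial (Fin 3) ℂ have order ≥ d, and let f̃ ∈ MvPolynomial (Fin 3) ℂ satisfy y₁^d · f̃ = σ(f), where σ is the blow-up substitution. Let b = (b₁,b₂,b₃) ∈ ℂ³ with b₁ ≠ 0. If f̃(b) = 0 and all three partial derivatives of f̃ vanish at b, then at the point w := (b₁, b₁b₂, b₁b₃) (which is nonzero), one has f(w) = 0 and all three partial derivatives of f vanish at w. (Critical zeros of the strict transform lying off the exceptional divisor map to critical zeros of f away from the origin; this is the step used in the proof of Claim 4.2 to contradict the isolatedness of the singularity of f.) -/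
/-!
Off the exceptional divisor the blow-up chart is a local isomorphism: at `b` with `b₁ ≠ 0` its
Jacobian determinant is `b₁²`. Since `σ(f) = y₁^d · f̃` has a critical zero wherever `f̃` does, the
chain rule `∇σ(f)(b) = J(b) · (∇f)(w)` forces `(∇f)(w) = 0`, and `f(w) = σ(f)(b) = 0`.
-/

open MvPolynomial

/-- The blow-up substitution `σ : z₁ ↦ y₁, z₂ ↦ y₁y₂, z₃ ↦ y₁y₃`
(first chart of the point blow-up of `ℂ³` at the origin). -/
noncomputable def blowupSubst : MvPolynomial (Fin 3) ℂ →ₐ[ℂ] MvPolynomial (Fin 3) ℂ :=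
  aeval ![X 0, X 0 * X 1, X 0 * X 2]

open scoped Matrix

namespace MvPolynomial

section Semiring

variable {R σ τ : Type*} [CommSemiring R]

theorem eval_aeval (b : τ → R) (g : σ → MvPolynomial τ R) (p : MvPolynomial σ R) :
    eval b (aeval g p) = eval (fun j ↦ eval b (g j)) p := by
  simpa [← aeval_eq_bind₁, coe_aeval_eq_eval] using aeval_bind₁ b g p

theorem pderiv_aeval [Fintype σ] (g : σ → MvPolynomial τ R) (i : τ) (p : MvPolynomial σ R) :
    pderiv i (aeval g p) = ∑ j, aeval g (pderiv j p) * pderiv i (g j) := by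
  classical
  induction p using MvPolynomial.induction_on with
  | C a => simp
  | add p q hp hq => simp only [map_add, hp, hq, add_mul, Finset.sum_add_distrib]
  | mul_X p k hp =>
    simp only [map_mul, aeval_X, pderiv_mul, hp, pderiv_X, map_add, add_mul,
      Finset.sum_add_distrib, Finset.sum_mul]
    simp [Pi.single_apply, mul_right_comm]

/-- Row `i`, column `j`: `∂ gⱼ / ∂ yᵢ` at `b`. -/
noncomputable def jacobianAt (g : σ → MvPolynomial τ R) (b : τ → R) : Matrix τ σ R :=
  Matrix.of fun i j ↦ eval b (pderiv i (g j))

theorem eval_pderiv_aeval [Fintype σ] (g : σ → MvPolynomial τ R) (b : τ → R)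
    (p : MvPolynomial σ R) :
    (fun i ↦ eval b (pderiv i (aeval g p))) =
      jacobianAt g b *ᵥ fun j ↦ eval (fun k ↦ eval b (g k)) (pderiv j p) := by
  ext i
  simp only [pderiv_aeval, map_sum, map_mul, eval_aeval, jacobianAt, Matrix.mulVec, dotProduct,
    Matrix.of_apply, mul_comm]

theorem eval_pderiv_mul_eq_zero {b : σ → R} {p : MvPolynomial σ R} (hp : eval b p = 0)
    (hp' : ∀ i, eval b (pderiv i p) = 0) (q : MvPolynomial σ R) (i : σ) :
    eval b (pderiv i (q * p)) = 0 := by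
  simp [hp, hp' i]

end Semiring

theorem eval_pderiv_eq_zero_of_det_jacobianAt_ne_zero {R σ : Type*} [CommRing R]
    [NoZeroDivisors R] [Fintype σ] [DecidableEq σ] {g : σ → MvPolynomial σ R} {b : σ → R}
    (hJ : (jacobianAt g b).det ≠ 0) {p : MvPolynomial σ R}
    (hp : ∀ i, eval b (pderiv i (aeval g p)) = 0) (j : σ) :
    eval (fun k ↦ eval b (g k)) (pderiv j p) = 0 := by
  have hmulVec : jacobianAt g b *ᵥ (fun j ↦ eval (fun k ↦ eval b (g k)) (pderiv j p)) = 0 := by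
    rw [← eval_pderiv_aeval]
    ext i
    exact hp i
  exact congrFun (Matrix.eq_zero_of_mulVec_eq_zero hJ hmulVec) j

end MvPolynomial

theorem eval_blowupChart (b : Fin 3 → ℂ) :
    (fun k ↦ eval b (![X 0, X 0 * X 1, X 0 * X 2] k)) = ![b 0, b 0 * b 1, b 0 * b 2] := by
  ext k
  fin_cases k <;> simp

theorem eval_blowupSubst (b : Fin 3 → ℂ) (p : MvPolynomial (Fin 3) ℂ) :
    eval b (blowupSubst p) = eval ![b 0, b 0 * b 1, b 0 * b 2] p := by
  rw [blowupSubst, eval_aeval, eval_blowupChart]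

theorem det_jacobianAt_blowupChart (b : Fin 3 → ℂ) :
    (jacobianAt ![X 0, X 0 * X 1, X 0 * X 2] b).det = b 0 ^ 2 := by
  simp [Matrix.det_fin_three, jacobianAt, pderiv_X, sq]

theorem critical_zero_off_exceptional_divisor_general (d : ℕ)
    (f ftilde : MvPolynomial (Fin 3) ℂ)
    (hstrict : X 0 ^ d * ftilde = blowupSubst f)
    (b : Fin 3 → ℂ) (hb1 : b 0 ≠ 0)
    (hz : eval b ftilde = 0)
    (hcrit : ∀ i : Fin 3, eval b (pderiv i ftilde) = 0) :
    (![b 0, b 0 * b 1, b 0 * b 2] : Fin 3 → ℂ) ≠ 0 ∧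
    eval ![b 0, b 0 * b 1, b 0 * b 2] f = 0 ∧
    ∀ i : Fin 3, eval ![b 0, b 0 * b 1, b 0 * b 2] (pderiv i f) = 0 := by
  have hσcrit (i : Fin 3) : eval b (pderiv i (blowupSubst f)) = 0 := by
    rw [← hstrict]
    exact eval_pderiv_mul_eq_zero hz hcrit _ i
  have hJ : (jacobianAt ![X 0, X 0 * X 1, X 0 * X 2] b).det ≠ 0 := by
    rw [det_jacobianAt_blowupChart]
    exact pow_ne_zero 2 hb1
  refine ⟨fun hw ↦ hb1 (by simpa using congrFun hw 0), ?_, fun i ↦ ?_⟩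
  · rw [← eval_blowupSubst, ← hstrict, map_mul, hz, mul_zero]
  · rw [← eval_blowupChart]
    exact eval_pderiv_eq_zero_of_det_jacobianAt_ne_zero hJ hσcrit i

/-- Critical zeros of the strict transform `f̃` (with `y₁^d · f̃ = σ(f)`) lying off
the exceptional divisor `y₁ = 0` map, under the blow-up, to critical zeros of `f`
away from the origin. -/
theorem critical_zero_off_exceptional_divisor (d : ℕ) (hd : 1 ≤ d)
    (f ftilde : MvPolynomial (Fin 3) ℂ)
    (horder : ∀ k < d, homogeneousComponent k f = 0)
    (hstrict : X 0 ^ d * ftilde = blowupSubst f)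
    (b : Fin 3 → ℂ) (hb1 : b 0 ≠ 0)
    (hz : eval b ftilde = 0)
    (hcrit : ∀ i : Fin 3, eval b (pderiv i ftilde) = 0) :
    (![b 0, b 0 * b 1, b 0 * b 2] : Fin 3 → ℂ) ≠ 0 ∧
    eval ![b 0, b 0 * b 1, b 0 * b 2] f = 0 ∧
    ∀ i : Fin 3, eval ![b 0, b 0 * b 1, b 0 * b 2] (pderiv i f) = 0 :=
  critical_zero_off_exceptional_divisor_general d f ftilde hstrict b hb1 hz hcrit
end

section
/- Let d ≥ 1 and let f ∈ MvPolynomial (Fin 3) ℂ have order ≥ d, with homogeneous decomposition f = Σ_{j≥0} f_{d+j}, and let f̃ := Σ_{j≥0} y₁^j · f_{d+j}(1,y₂,y₃) be its strict transform. Let b₂, b₃ ∈ ℂ. If f̃(0,b₂,b₃) = 0 and all three partial derivatives of f̃ vanish at (0,b₂,b₃), then the two-variable polynomial g(y₂,y₃) := f_d(1,y₂,y₃) satisfies g(b₂,b₃) = 0 and both partial derivatives of g vanish at (b₂,b₃); that is, (b₂,b₃) is a singular point of the affine curve f_d(1,y₂,y₃) = 0 (the chart of the projective tangent cone). -/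
/-!
Substituting `1` for the first variable of a polynomial in `Fin 3` variables factors through
`MvPolynomial (Fin 2)`: `f_d(1, y₂, y₃)` is the curve polynomial `g(y₂, y₃)` with its variables
shifted up by one, so it does not involve `y₁`. Splitting off the `j = 0` term of the strict
transform gives `f̃ = g(y₂, y₃) + y₁ · r`. On `y₁ = 0` the second summand vanishes, and so do its
derivatives in `y₂, y₃`; hence the value of `f̃` and its `y₂`-, `y₃`-derivatives at `(0, b₂, b₃)`
are those of `g` at `(b₂, b₃)`.
-/

open MvPolynomial

namespace MvPolynomial

variable {R : Type*} [CommSemiring R] {n : ℕ}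

lemma sum_range_succ_X_pow_mul {σ : Type*} (i : σ) (g : ℕ → MvPolynomial σ R) (N : ℕ) :
    ∑ j ∈ Finset.range (N + 1), X i ^ j * g j =
      g 0 + X i * ∑ j ∈ Finset.range N, X i ^ j * g (j + 1) := by
  rw [Finset.sum_range_succ', Finset.mul_sum, add_comm]
  simp only [pow_zero, one_mul, pow_succ, mul_assoc, mul_left_comm (X i)]

lemma eval_cons_zero_rename_succ_add_X_zero_mul (w : Fin n → R)
    (q : MvPolynomial (Fin n) R) (r : MvPolynomial (Fin (n + 1)) R) :
    eval (Fin.cons 0 w) (rename Fin.succ q + X 0 * r) = eval w q := by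
  simp [eval_rename, Fin.cons_comp_succ]

lemma pderiv_succ_rename_succ_add_X_zero_mul (i : Fin n)
    (q : MvPolynomial (Fin n) R) (r : MvPolynomial (Fin (n + 1)) R) :
    pderiv i.succ (rename Fin.succ q + X 0 * r) =
      rename Fin.succ (pderiv i q) + X 0 * pderiv i.succ r := by
  rw [map_add, pderiv_rename (Fin.succ_injective n), Derivation.leibniz,
    pderiv_X_of_ne (Fin.succ_ne_zero i).symm, smul_zero, add_zero, smul_eq_mul]

lemma aeval_cons_one_X_succ (p : MvPolynomial (Fin (n + 1)) R) :
    aeval (Fin.cons 1 fun i => X i.succ) p =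
      rename Fin.succ (aeval (Fin.cons (1 : MvPolynomial (Fin n) R) X) p) := by
  rw [aeval_eq_bind₁, aeval_eq_bind₁, rename_bind₁]
  congr 2
  funext j
  cases j using Fin.cases <;> simp

end MvPolynomial

theorem critical_zero_on_exceptional_divisor_is_singular_of_cone_general
    (d : ℕ) (f : MvPolynomial (Fin 3) ℂ)
    (ftilde : MvPolynomial (Fin 3) ℂ)
    (hft : ftilde =
      ∑ j ∈ Finset.range (f.totalDegree + 1),
        X 0 ^ j * aeval ![1, X 1, X 2] (homogeneousComponent (d + j) f))
    (b₂ b₃ : ℂ)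
    (hz : eval ![0, b₂, b₃] ftilde = 0)
    (hcrit : ∀ i : Fin 3, eval ![0, b₂, b₃] (pderiv i ftilde) = 0) :
    eval ![b₂, b₃]
        (aeval ![(1 : MvPolynomial (Fin 2) ℂ), X 0, X 1]
          (homogeneousComponent d f)) = 0 ∧
    ∀ i : Fin 2,
      eval ![b₂, b₃]
        (pderiv i (aeval ![(1 : MvPolynomial (Fin 2) ℂ), X 0, X 1]
          (homogeneousComponent d f))) = 0 := by
  set g := aeval ![(1 : MvPolynomial (Fin 2) ℂ), X 0, X 1] (homogeneousComponent d f)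
  have hcone : aeval ![1, X 1, X 2] (homogeneousComponent d f) = rename Fin.succ g := by
    convert aeval_cons_one_X_succ _ using 4 <;>
      (funext j; fin_cases j <;> rfl)
  obtain ⟨r, hsplit⟩ : ∃ r, ftilde = rename Fin.succ g + X 0 * r :=
    ⟨_, by rw [hft, sum_range_succ_X_pow_mul, add_zero, hcone]⟩
  refine ⟨?_, fun i => ?_⟩
  · rw [← eval_cons_zero_rename_succ_add_X_zero_mul _ _ r, ← hsplit]
    exact hz
  · rw [← eval_cons_zero_rename_succ_add_X_zero_mul _ _ (pderiv i.succ r),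
      ← pderiv_succ_rename_succ_add_X_zero_mul, ← hsplit]
    exact hcrit i.succ

/-- Critical zeros of the strict transform
`f̃ = Σ_j y₁^j · f_{d+j}(1,y₂,y₃)` lying on the exceptional divisor `y₁ = 0`
are singular points of the affine chart `f_d(1,y₂,y₃) = 0` of the projective
tangent cone. -/
theorem critical_zero_on_exceptional_divisor_is_singular_of_cone
    (d : ℕ) (hd : 1 ≤ d) (f : MvPolynomial (Fin 3) ℂ)
    (horder : ∀ k < d, homogeneousComponent k f = 0)
    (ftilde : MvPolynomial (Fin 3) ℂ)
    (hft : ftilde =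
      ∑ j ∈ Finset.range (f.totalDegree + 1),
        X 0 ^ j * aeval ![1, X 1, X 2] (homogeneousComponent (d + j) f))
    (b₂ b₃ : ℂ)
    (hz : eval ![0, b₂, b₃] ftilde = 0)
    (hcrit : ∀ i : Fin 3, eval ![0, b₂, b₃] (pderiv i ftilde) = 0) :
    eval ![b₂, b₃]
        (aeval ![(1 : MvPolynomial (Fin 2) ℂ), X 0, X 1]
          (homogeneousComponent d f)) = 0 ∧
    ∀ i : Fin 2,
      eval ![b₂, b₃]
        (pderiv i (aeval ![(1 : MvPolynomial (Fin 2) ℂ), X 0, X 1]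
          (homogeneousComponent d f))) = 0 :=
  critical_zero_on_exceptional_divisor_is_singular_of_cone_general d f ftilde hft b₂ b₃ hz hcrit
end

section
/- Let h ∈ MvPolynomial (Fin 2) ℂ be a polynomial in two variables X₂, X₃, let H ∈ MvPolynomial (Fin 3) ℂ be its image under the variable inclusion sending X₂, X₃ to the last two variables of MvPolynomial (Fin 3) ℂ, let c ∈ ℂ with c ≠ 0, and let m ≥ 1. Set g := H + c·X₁^m ∈ MvPolynomial (Fin 3) ℂ. If the two-variable Milnor algebra MvPolynomial (Fin 2) ℂ / J(h) is finite-dimensional over ℂ, then the Milnor algebra of g is finite-dimensional over ℂ and dim_ℂ (MvPolynomial (Fin 3) ℂ / J(g)) = (m−1) · dim_ℂ (MvPolynomial (Fin 2) ℂ / J(h)). (Milnor number of the suspension h(x₂,x₃) + c x₁^m, the model form of a blow-ADE singularity of blow-order m.) -/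
/-!
Under `finSuccEquiv`, `ℂ[x₁, x₂, x₃] = ℂ[x₂, x₃][x₁]`. Since `∂g/∂x₁ = c m x₁^(m-1)` with `c m` a
unit and `∂g/∂xᵢ = ∂h/∂xᵢ` for the other variables, the Jacobian ideal of `g` becomes
`(x₁^(m-1)) + J(h)[x₁]`. Hence the Milnor algebra of `g` is `(ℂ[x₂, x₃] ⧸ J(h))[x₁] ⧸ (x₁^(m-1))`,
a free module of rank `m - 1` over the Milnor algebra of `h`.
-/

open MvPolynomial

/-- The Jacobian ideal of `g`, generated by its partial derivatives. -/
noncomputable def jacobianIdeal {n : ℕ} (g : MvPolynomial (Fin n) ℂ) :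
    Ideal (MvPolynomial (Fin n) ℂ) :=
  Ideal.span (Set.range fun i : Fin n => pderiv i g)

namespace Polynomial

section QuotientSup

variable {R A B : Type*} [CommRing R] [CommRing A] [CommRing B] [Algebra R A] [Algebra R B]
  (φ : A →ₐ[R] B)

theorem ker_quotientMk_comp_mapAlgHom (hφ : Function.Surjective φ) (f : A[X]) :
    RingHom.ker ((Ideal.Quotient.mkₐ R (Ideal.span {f.map (φ : A →+* B)})).comp (mapAlgHom φ)) =
      Ideal.span {f} ⊔ (RingHom.ker φ).map C := by
  have hsurj : Function.Surjective (mapRingHom (φ : A →+* B)) := map_surjective _ hφ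
  have hspan : Ideal.span {f.map (φ : A →+* B)} = (Ideal.span {f}).map (mapRingHom (φ : A →+* B)) := by
    rw [Ideal.map_span, Set.image_singleton, coe_mapRingHom]
  calc _ = (Ideal.span {f.map (φ : A →+* B)}).comap (mapRingHom (φ : A →+* B)) := by
        ext p
        exact Ideal.Quotient.eq_zero_iff_mem
    _ = Ideal.span {f} ⊔ (RingHom.ker φ).map C := by
        rw [hspan, Ideal.comap_map_of_surjective _ hsurj, ← RingHom.ker_eq_comap_bot,
          ker_mapRingHom]
        rfl

noncomputable def quotientSpanSupMapKerAlgEquiv (hφ : Function.Surjective φ) (f : A[X]) :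
    (A[X] ⧸ (Ideal.span {f} ⊔ (RingHom.ker φ).map C)) ≃ₐ[R]
      B[X] ⧸ Ideal.span {f.map (φ : A →+* B)} :=
  (Ideal.quotientEquivAlgOfEq R (ker_quotientMk_comp_mapAlgHom φ hφ f).symm).trans
    (Ideal.quotientKerAlgEquivOfSurjective
      (Ideal.Quotient.mk_surjective.comp (map_surjective (φ : A →+* B) hφ)))

end QuotientSup

section Finrank

variable {K S : Type*} [Field K] [CommRing S] [Algebra K S]

theorem finrank_quotient_span_monic [Nontrivial S] {f : S[X]} (hf : f.Monic) :
    Module.finrank K (S[X] ⧸ Ideal.span {f}) = f.natDegree * Module.finrank K S := by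
  have := hf.free_quotient
  rw [← finrank_quotient_span_eq_natDegree' hf, mul_comm, Module.finrank_mul_finrank]

theorem finrank_quotient_span_X_pow (k : ℕ) :
    Module.finrank K (S[X] ⧸ Ideal.span {(X : S[X]) ^ k}) = k * Module.finrank K S := by
  cases subsingleton_or_nontrivial S
  · simp [Module.finrank_zero_of_subsingleton]
  · rw [finrank_quotient_span_monic (monic_X_pow k), natDegree_X_pow]

theorem finiteDimensional_quotient_span_monic [FiniteDimensional K S] {f : S[X]} (hf : f.Monic) :
    FiniteDimensional K (S[X] ⧸ Ideal.span {f}) :=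
  have := hf.finite_quotient
  Module.Finite.trans S _

end Finrank

end Polynomial

namespace MvPolynomial

variable {R : Type*} [CommSemiring R] {n : ℕ}

theorem pderiv_zero_rename_succ (p : MvPolynomial (Fin n) R) :
    pderiv 0 (rename Fin.succ p) = 0 := by
  apply pderiv_eq_zero_of_notMem_vars
  intro hmem
  obtain ⟨j, -, hj⟩ := Finset.mem_image.mp (vars_rename _ p hmem)
  exact Fin.succ_ne_zero j hj

theorem finSuccEquiv_rename_succ (p : MvPolynomial (Fin n) R) :
    finSuccEquiv R n (rename Fin.succ p) = Polynomial.C p := by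
  induction p using MvPolynomial.induction_on with
  | C a => simp [finSuccEquiv_apply]
  | add p q hp hq => simp [hp, hq]
  | mul_X p i hp => simp [hp, finSuccEquiv_X_succ]

theorem pderiv_zero_suspension (p : MvPolynomial (Fin n) R) (c : R) (m : ℕ) :
    pderiv 0 (rename Fin.succ p + C c * X 0 ^ m) = C (c * m) * X 0 ^ (m - 1) := by
  rw [map_add, pderiv_zero_rename_succ, zero_add, pderiv_C_mul, pderiv_pow, pderiv_X_self,
    C_mul, map_natCast]
  ring

theorem pderiv_succ_suspension (p : MvPolynomial (Fin n) R) (c : R) (m : ℕ) (i : Fin n) :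
    pderiv i.succ (rename Fin.succ p + C c * X 0 ^ m) = rename Fin.succ (pderiv i p) := by
  rw [map_add, pderiv_rename (Fin.succ_injective n), pderiv_C_mul, pderiv_pow,
    pderiv_X_of_ne (Fin.succ_ne_zero i).symm]
  ring

end MvPolynomial

section Suspension

variable {n : ℕ} (h : MvPolynomial (Fin n) ℂ) {c : ℂ} {m : ℕ}

theorem map_finSuccEquiv_jacobianIdeal_suspension (hc : c ≠ 0) (hm : m ≠ 0) :
    (jacobianIdeal (rename Fin.succ h + C c * X 0 ^ m)).map (finSuccEquiv ℂ n) =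
      Ideal.span {Polynomial.X ^ (m - 1)} ⊔ (jacobianIdeal h).map Polynomial.C := by
  have hunit : IsUnit (Polynomial.C (C (c * m)) : Polynomial (MvPolynomial (Fin n) ℂ)) :=
    (isUnit_iff_ne_zero.mpr (mul_ne_zero hc (Nat.cast_ne_zero.mpr hm))).map
      (algebraMap ℂ (Polynomial (MvPolynomial (Fin n) ℂ)))
  rw [jacobianIdeal, jacobianIdeal, Ideal.map_span, Ideal.map_span, Fin.range_fin_succ,
    Set.image_insert_eq, Ideal.span_insert, ← Set.range_comp, ← Set.range_comp]
  congr 1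
  · have hX : finSuccEquiv ℂ n (pderiv 0 (rename Fin.succ h + C c * X 0 ^ m)) =
        Polynomial.C (C (c * m)) * Polynomial.X ^ (m - 1) := by
      rw [pderiv_zero_suspension, map_mul, map_pow, finSuccEquiv_X_zero,
        ← finSuccEquiv_rename_succ, rename_C]
    rw [hX, Ideal.span_singleton_mul_left_unit hunit]
  · congr 2
    funext i
    simp only [Function.comp_apply, Fin.tail, pderiv_succ_suspension, finSuccEquiv_rename_succ]

variable {B : Type*} [CommRing B] [Algebra ℂ B] {φ : MvPolynomial (Fin n) ℂ →ₐ[ℂ] B}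

noncomputable def suspensionMilnorAlgebraEquiv (hφ : Function.Surjective φ)
    (hker : RingHom.ker φ = jacobianIdeal h) (hc : c ≠ 0) (hm : m ≠ 0) :
    (MvPolynomial (Fin (n + 1)) ℂ ⧸ jacobianIdeal (rename Fin.succ h + C c * X 0 ^ m)) ≃ₐ[ℂ]
      Polynomial B ⧸ Ideal.span {(Polynomial.X : Polynomial B) ^ (m - 1)} :=
  (Ideal.quotientEquivAlg _ _ (finSuccEquiv ℂ n)
    ((map_finSuccEquiv_jacobianIdeal_suspension h hc hm).trans (by rw [hker])).symm).trans <|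
  (Polynomial.quotientSpanSupMapKerAlgEquiv φ hφ (Polynomial.X ^ (m - 1))).trans <|
  Ideal.quotientEquivAlgOfEq ℂ (by rw [Polynomial.map_pow, Polynomial.map_X])

end Suspension

/-- Milnor number of the suspension `h(x₂,x₃) + c·x₁^m` (the model form of a
blow-ADE singularity of blow-order `m`): if the Milnor algebra of `h` is
finite-dimensional, then so is that of `g = h(x₂,x₃) + c x₁^m`, and
`μ(g) = (m-1)·μ(h)`. -/
theorem milnor_number_suspension (h : MvPolynomial (Fin 2) ℂ)
    (c : ℂ) (hc : c ≠ 0) (m : ℕ) (hm : 1 ≤ m)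
    (H : MvPolynomial (Fin 3) ℂ) (hH : H = rename (Fin.succ : Fin 2 → Fin 3) h)
    (g : MvPolynomial (Fin 3) ℂ) (hg : g = H + C c * X 0 ^ m)
    (hfin : FiniteDimensional ℂ (MvPolynomial (Fin 2) ℂ ⧸ jacobianIdeal h)) :
    FiniteDimensional ℂ (MvPolynomial (Fin 3) ℂ ⧸ jacobianIdeal g) ∧
    Module.finrank ℂ (MvPolynomial (Fin 3) ℂ ⧸ jacobianIdeal g) =
      (m - 1) * Module.finrank ℂ (MvPolynomial (Fin 2) ℂ ⧸ jacobianIdeal h) := by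
  subst hH hg
  have := Polynomial.finiteDimensional_quotient_span_monic (K := ℂ) (Polynomial.monic_X_pow
    (R := MvPolynomial (Fin 2) ℂ ⧸ jacobianIdeal h) (m - 1))
  let e := (suspensionMilnorAlgebraEquiv h (Ideal.Quotient.mkₐ_surjective ℂ (jacobianIdeal h))
    (Ideal.Quotient.mkₐ_ker ℂ _) hc (Nat.one_le_iff_ne_zero.mp hm)).toLinearEquiv
  exact ⟨e.symm.finiteDimensional, e.finrank_eq.trans (Polynomial.finrank_quotient_span_X_pow _)⟩
end
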